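/- arXiv:2310.17611 — 4 statements merged into one kernel-verified Lean document; each statement's English description precedes it below -/
import Mathlib

section
/- Let V be a finite collection of vectors in ℝ^d and ⫫ the partial orthogonality independence model. Then ⫫ satisfies the weak union axiom: if A ⫫ (B ∪ D) | C, then A ⫫ B | (C ∪ D), for disjoint subsets A, B, C, D of V. -/
/-!
The residual `a^⊥_C` is orthogonal to `span C`, so for every `x` its inner product with `x^⊥_C`
equals its inner product with `x`. The hypothesis therefore makes `a^⊥_C` orthogonal to
`span (C ∪ D)`; as `a - a^⊥_C ∈ span C`, this forces `a^⊥_{C ∪ D} = a^⊥_C`, and then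
`⟪a^⊥_{C ∪ D}, b^⊥_{C ∪ D}⟫ = ⟪a^⊥_C, b⟫ = ⟪a^⊥_C, b^⊥_C⟫ = 0`.
-/

noncomputable def resid {E : Type*} [NormedAddCommGroup E] [InnerProductSpace ℝ E]
    [FiniteDimensional ℝ E] (C : Set E) (v : E) : E :=
  v - (Submodule.orthogonalProjectionOnto (Submodule.span ℝ C) v : E)

/-- Partial orthogonality: `A ⫫ B | C` iff for all `a ∈ A`, `b ∈ B`, the residuals of
`a` and `b` after orthogonal projection onto the span of `C` are orthogonal. -/
def pOrth {d : ℕ} (A B C : Finset (EuclideanSpace ℝ (Fin d))) : Prop :=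
  ∀ a ∈ A, ∀ b ∈ B,
    inner ℝ (resid (C : Set (EuclideanSpace ℝ (Fin d))) a)
      (resid (C : Set (EuclideanSpace ℝ (Fin d))) b) = (0 : ℝ)

open Submodule

theorem Submodule.mem_orthogonal_span_iff {𝕜 E : Type*} [RCLike 𝕜] [NormedAddCommGroup E]
    [InnerProductSpace 𝕜 E] {s : Set E} {w : E} :
    w ∈ (span 𝕜 s)ᗮ ↔ ∀ u ∈ s, inner 𝕜 w u = 0 := by
  rw [← span_singleton_le_iff_mem, ← isOrtho_iff_le, isOrtho_span]
  simp

section Residual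

variable {E : Type*} [NormedAddCommGroup E] [InnerProductSpace ℝ E] [FiniteDimensional ℝ E]

theorem resid_eq_sub_starProjection (C : Set E) (v : E) :
    resid C v = v - (span ℝ C).starProjection v :=
  rfl

theorem resid_mem_orthogonal (C : Set E) (v : E) : resid C v ∈ (span ℝ C)ᗮ :=
  sub_starProjection_mem_orthogonal v

theorem inner_resid_right_of_mem_orthogonal {C : Set E} {u : E} (hu : u ∈ (span ℝ C)ᗮ)
    (v : E) : inner ℝ u (resid C v) = inner ℝ u v := by
  rw [resid_eq_sub_starProjection, inner_sub_right,
    inner_left_of_mem_orthogonal (starProjection_apply_mem _ v) hu, sub_zero]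

theorem resid_mem_orthogonal_span_union {C D : Set E} {v : E}
    (h : ∀ x ∈ D, inner ℝ (resid C v) (resid C x) = 0) :
    resid C v ∈ (span ℝ (C ∪ D))ᗮ := by
  rw [span_union, ← inf_orthogonal]
  refine ⟨resid_mem_orthogonal C v, mem_orthogonal_span_iff.2 fun x hx => ?_⟩
  rw [← inner_resid_right_of_mem_orthogonal (resid_mem_orthogonal C v)]
  exact h x hx

theorem resid_eq_of_subset {C C' : Set E} {v : E} (hCC' : C ⊆ C')
    (h : resid C v ∈ (span ℝ C')ᗮ) : resid C' v = resid C v := by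
  have hproj : (span ℝ C').starProjection v = (span ℝ C).starProjection v :=
    eq_starProjection_of_mem_orthogonal (span_mono hCC' (starProjection_apply_mem _ v)) h
  rw [resid_eq_sub_starProjection, hproj, resid_eq_sub_starProjection]

end Residual

theorem partial_orthogonality_weak_union_general {d : ℕ}
    [DecidableEq (EuclideanSpace ℝ (Fin d))]
    (A B C D : Finset (EuclideanSpace ℝ (Fin d)))
    (h : pOrth A (B ∪ D) C) : pOrth A B (C ∪ D) := by
  intro a ha b hb
  have haCD : resid (C : Set _) a ∈ (span ℝ ((C : Set _) ∪ D))ᗮ :=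
    resid_mem_orthogonal_span_union fun x hx => h a ha x (Finset.mem_union_right B hx)
  rw [Finset.coe_union, resid_eq_of_subset Set.subset_union_left haCD,
    inner_resid_right_of_mem_orthogonal haCD,
    ← inner_resid_right_of_mem_orthogonal (resid_mem_orthogonal _ a)]
  exact h a ha b (Finset.mem_union_left D hb)

/-- Partial orthogonality satisfies the weak union axiom. -/
theorem partial_orthogonality_weak_union {d : ℕ}
    [DecidableEq (EuclideanSpace ℝ (Fin d))]
    (V A B C D : Finset (EuclideanSpace ℝ (Fin d)))
    (hA : A ⊆ V) (hB : B ⊆ V) (hC : C ⊆ V) (hD : D ⊆ V)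
    (hAB : Disjoint A B) (hAC : Disjoint A C) (hAD : Disjoint A D)
    (hBC : Disjoint B C) (hBD : Disjoint B D) (hCD : Disjoint C D)
    (h : pOrth A (B ∪ D) C) : pOrth A B (C ∪ D) :=
  partial_orthogonality_weak_union_general A B C D h
end

section
/- For any finite simple graph G on n vertices, the set of real numbers ε that fail to be a perfect perturbation factor for G is finite; equivalently, all but finitely many ε ∈ ℝ are perfect perturbation factors for G. -/
/-!
Over `R⟦X⟧` the matrix `1 + X • A` is inverted by the Neumann series `∑ (-X)^k A^k`, and
`det (1 + X • A)` is a unit there since its constant term is `1`. So an entry `(a, b)` of the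
polynomial matrix `adj (1 + X • A)` is the zero polynomial iff `(A^k)_{ab} = 0` for every `k`.
Outside the finitely many roots of `det (1 + X • A)` and of the nonzero adjugate entries,
`1 + ε • A` is thus invertible and `(1 + ε • A)⁻¹_{ab} = 0` iff `(A^k)_{ab} = 0` for all `k`.
For the principal submatrix of `Adj(G)` on `I`, `(A^k)_{ab}` counts the walks of length `k` from
`a` to `b` inside `I`, which all vanish iff the vertices outside `I` separate `a` from `b`.
-/

open Matrix

/-- `C` separates `a` and `b` in the graph `G`. -/
def gsep {V : Type*} (G : SimpleGraph V) (a b : V) (C : Finset V) : Prop :=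
  ∀ p : G.Walk a b, ∃ c ∈ C, c ∈ p.support

/-- `ε` is a perfect perturbation factor for the graph `G`: `I + ε·Adj(G)` is invertible and,
for every index set `I`, the `(i,j)` entry of the inverse of the principal submatrix of
`I + ε·Adj(G)` indexed by `I` vanishes iff `i` and `j` are separated in `G` by the vertices
outside `I`. -/
def IsPerfectPerturbation {n : ℕ} (G : SimpleGraph (Fin n)) [DecidableRel G.Adj] (ε : ℝ) : Prop :=
  IsUnit ((1 : Matrix (Fin n) (Fin n) ℝ) + ε • G.adjMatrix ℝ).det ∧
  ∀ (I : Finset (Fin n)) (i j : Fin n) (hi : i ∈ I) (hj : j ∈ I), i ≠ j →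
    ((((1 : Matrix (Fin n) (Fin n) ℝ) + ε • G.adjMatrix ℝ).submatrix
        (fun a : {x // x ∈ I} => (a : Fin n)) (fun a : {x // x ∈ I} => (a : Fin n)))⁻¹
        ⟨i, hi⟩ ⟨j, hj⟩ = 0
      ↔ gsep G i j (Finset.univ \ I))

open Polynomial
open scoped PowerSeries

theorem Polynomial.eventually_cofinite_eval_eq_zero_iff {K : Type*} [CommRing K] [IsDomain K]
    (p : K[X]) : ∀ᶠ x in Filter.cofinite, (p.eval x = 0 ↔ p = 0) := by
  by_cases hp : p = 0
  · simp [hp]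
  · exact Filter.eventually_cofinite.2 <|
      (finite_setOfPred_isRoot hp).subset fun x hx => by simpa [hp] using hx

namespace Matrix

variable {m R : Type*} [DecidableEq m]

theorem submatrix_one_add_smul {l α β : Type*} [DecidableEq l] [AddMonoidWithOne α] [SMul β α]
    (r : β) (A : Matrix m m α) {f : l → m} (hf : Function.Injective f) :
    (1 + r • A).submatrix f f = 1 + r • A.submatrix f f := by
  rw [← submatrix_one f hf]
  rfl

variable [CommRing R]

noncomputable def oneAddXSmul (A : Matrix m m R) : Matrix m m R[X] :=
  1 + (X : R[X]) • A.map C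

theorem map_eval_oneAddXSmul (A : Matrix m m R) (r : R) :
    (oneAddXSmul A).map (eval r) = 1 + r • A := by
  ext a b
  by_cases h : a = b <;> simp [oneAddXSmul, h] <;> ring

theorem map_coe_oneAddXSmul (A : Matrix m m R) :
    (oneAddXSmul A).map coeToPowerSeries.ringHom =
      1 + (PowerSeries.X : R⟦X⟧) • A.map PowerSeries.C := by
  ext a b
  by_cases h : a = b <;>
    simp only [oneAddXSmul, map_apply, coeToPowerSeries.ringHom_apply, add_apply, smul_apply,
      one_apply, h, smul_eq_mul, coe_add, coe_mul, coe_X, coe_C, coe_one, coe_zero, if_true,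
      if_false]

variable [Fintype m]

theorem eval_det_oneAddXSmul (A : Matrix m m R) (r : R) :
    (oneAddXSmul A).det.eval r = (1 + r • A).det := by
  rw [← map_eval_oneAddXSmul, ← coe_evalRingHom, RingHom.map_det]
  rfl

theorem eval_adjugate_oneAddXSmul (A : Matrix m m R) (r : R) (a b : m) :
    ((oneAddXSmul A).adjugate a b).eval r = (1 + r • A).adjugate a b := by
  simpa [RingHom.mapMatrix_apply, map_eval_oneAddXSmul] using
    congr_fun₂ (RingHom.map_adjugate (evalRingHom r) (oneAddXSmul A)) a b

theorem det_oneAddXSmul_ne_zero [Nontrivial R] (A : Matrix m m R) : (oneAddXSmul A).det ≠ 0 :=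
  fun h => by simpa [h] using eval_det_oneAddXSmul A 0

noncomputable def neumannSeries (A : Matrix m m R) : Matrix m m R⟦X⟧ :=
  of fun a b => PowerSeries.mk fun k => ((-A) ^ k) a b

theorem map_C_mul_neumannSeries (A : Matrix m m R) :
    A.map PowerSeries.C * neumannSeries A =
      of fun a b => PowerSeries.mk fun k => (A * (-A) ^ k) a b := by
  ext a b k
  simp [neumannSeries, mul_apply, map_sum, PowerSeries.coeff_C_mul]

theorem map_coe_oneAddXSmul_mul_neumannSeries (A : Matrix m m R) :
    (oneAddXSmul A).map coeToPowerSeries.ringHom * neumannSeries A = 1 := by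
  rw [map_coe_oneAddXSmul, add_mul, one_mul, smul_mul_assoc, map_C_mul_neumannSeries]
  ext a b k
  rcases k with _ | k
  · by_cases h : a = b <;> simp [neumannSeries, one_apply, h]
  · simp [neumannSeries, one_apply, apply_ite, pow_succ']

theorem isUnit_det_map_coe_oneAddXSmul (A : Matrix m m R) :
    IsUnit ((oneAddXSmul A).map coeToPowerSeries.ringHom).det := by
  have hdet : ((oneAddXSmul A).map coeToPowerSeries.ringHom).det =
      ((oneAddXSmul A).det : R⟦X⟧) := by
    simpa [RingHom.mapMatrix_apply] using
      (RingHom.map_det coeToPowerSeries.ringHom (oneAddXSmul A)).symm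
  rw [hdet, PowerSeries.isUnit_iff_constantCoeff, ← PowerSeries.coeff_zero_eq_constantCoeff_apply,
    Polynomial.coeff_coe, coeff_zero_eq_eval_zero, eval_det_oneAddXSmul]
  simp

theorem adjugate_oneAddXSmul_apply_eq_zero_iff (A : Matrix m m R) (a b : m) :
    (oneAddXSmul A).adjugate a b = 0 ↔ ∀ k, (A ^ k) a b = 0 := by
  set N := (oneAddXSmul A).map coeToPowerSeries.ringHom
  have hadj : N.adjugate = N.det • neumannSeries A := by
    rw [← mul_one N.adjugate, ← map_coe_oneAddXSmul_mul_neumannSeries, ← mul_assoc,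
      adjugate_mul, smul_mul, one_mul]
  have hcoe : ((oneAddXSmul A).adjugate a b : R⟦X⟧) = N.det * neumannSeries A a b := by
    simpa [RingHom.mapMatrix_apply, N, hadj] using
      congr_fun₂ (RingHom.map_adjugate coeToPowerSeries.ringHom (oneAddXSmul A)) a b
  rw [← Polynomial.coe_eq_zero_iff, hcoe, (isUnit_det_map_coe_oneAddXSmul A).mul_right_eq_zero]
  refine ⟨fun h k => ?_, fun h => PowerSeries.ext fun k => ?_⟩
  · have := congr_arg (PowerSeries.coeff k) h
    rcases k.even_or_odd with hk | hk <;> simpa [neumannSeries, hk.neg_pow] using this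
  · rcases k.even_or_odd with hk | hk <;> simp [neumannSeries, hk.neg_pow, h k]

theorem eventually_cofinite_inv_one_add_smul_apply_eq_zero_iff {K : Type*} [Field K]
    (A : Matrix m m K) :
    ∀ᶠ ε : K in Filter.cofinite, IsUnit (1 + ε • A).det ∧
      ∀ a b, ((1 + ε • A : Matrix m m K)⁻¹ a b = 0 ↔ ∀ k, (A ^ k) a b = 0) := by
  filter_upwards [(oneAddXSmul A).det.eventually_cofinite_eval_eq_zero_iff,
    Filter.eventually_all.2 fun a => Filter.eventually_all.2 fun b =>
      ((oneAddXSmul A).adjugate a b).eventually_cofinite_eval_eq_zero_iff] with ε hdet hadj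
  have hunit : IsUnit (1 + ε • A).det := by
    rw [isUnit_iff_ne_zero, ← eval_det_oneAddXSmul, Ne, hdet]
    exact det_oneAddXSmul_ne_zero A
  refine ⟨hunit, fun a b => ?_⟩
  rw [← adjugate_oneAddXSmul_apply_eq_zero_iff, ← hadj, eval_adjugate_oneAddXSmul]
  simp [inv_def, hunit.ne_zero]

end Matrix

namespace SimpleGraph

variable {V : Type*} (G : SimpleGraph V)

instance decidableRelComap {W : Type*} [DecidableRel G.Adj] (f : W → V) :
    DecidableRel (G.comap f).Adj :=
  fun a b => inferInstanceAs (Decidable (G.Adj (f a) (f b)))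

theorem adjMatrix_comap {W R : Type*} [Zero R] [One R] [DecidableRel G.Adj] (f : W → V) :
    (G.comap f).adjMatrix R = (G.adjMatrix R).submatrix f f := by
  ext a b
  simp [adjMatrix_apply]

theorem reachable_iff_exists_adjMatrix_pow_apply_ne_zero {R : Type*} [Semiring R] [CharZero R]
    [Fintype V] [DecidableEq V] [DecidableRel G.Adj] {u v : V} :
    G.Reachable u v ↔ ∃ k, (G.adjMatrix R ^ k) u v ≠ 0 := by
  simp_rw [adjMatrix_pow_apply_eq_card_walk, Nat.cast_ne_zero, ← pos_iff_ne_zero,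
    Fintype.card_pos_iff]
  exact ⟨fun ⟨p⟩ => ⟨p.length, ⟨p, rfl⟩⟩, fun ⟨_, ⟨p, _⟩⟩ => ⟨p⟩⟩

theorem reachable_comap_subtype_val_iff {P : V → Prop} {a b : Subtype P} :
    (G.comap Subtype.val).Reachable a b ↔ ∃ p : G.Walk a b, ∀ x ∈ p.support, P x := by
  constructor
  · rintro ⟨q⟩
    refine ⟨q.map (Hom.comap Subtype.val G), fun x hx => ?_⟩
    obtain ⟨y, -, rfl⟩ := List.mem_map.1 (Walk.support_map _ q ▸ hx)
    exact y.2
  · rintro ⟨p, hp⟩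
    suffices h : ∀ {u v : V} (p : G.Walk u v) (hu : P u) (hv : P v), (∀ x ∈ p.support, P x) →
        (G.comap Subtype.val).Reachable ⟨u, hu⟩ ⟨v, hv⟩ from h p a.2 b.2 hp
    intro u v p
    induction p with
    | nil => exact fun _ _ _ => Reachable.refl _
    | @cons u w v huw q ih =>
      intro hu hv hq
      have hw : P w := hq w (by simp)
      exact (show (G.comap Subtype.val).Adj ⟨u, hu⟩ ⟨w, hw⟩ from huw).reachable.trans
        (ih hw hv fun x hx => hq x (by simp [hx]))

end SimpleGraph

theorem gsep_univ_sdiff_iff_forall_pow_apply_eq_zero {V R : Type*} [Fintype V] [DecidableEq V]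
    [Semiring R] [CharZero R] (G : SimpleGraph V) [DecidableRel G.Adj] (I : Finset V)
    (a b : I) :
    gsep G a b (Finset.univ \ I) ↔
      ∀ k, (((G.adjMatrix R).submatrix (↑) (↑) : Matrix I I R) ^ k) a b = 0 := by
  rw [← SimpleGraph.adjMatrix_comap, ← not_iff_not, not_forall,
    ← SimpleGraph.reachable_iff_exists_adjMatrix_pow_apply_ne_zero,
    SimpleGraph.reachable_comap_subtype_val_iff]
  simp only [gsep, Finset.mem_sdiff, Finset.mem_univ, true_and, not_forall, not_exists,
    not_and]
  exact exists_congr fun p => forall_congr' fun x => not_imp_not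

/-- For any finite simple graph, all but finitely many `ε ∈ ℝ` are perfect perturbation
factors. -/
theorem almost_every_perturbation_perfect {n : ℕ} (G : SimpleGraph (Fin n))
    [DecidableRel G.Adj] :
    {ε : ℝ | ¬ IsPerfectPerturbation G ε}.Finite := by
  refine Filter.eventually_cofinite.1 ?_
  have hprincipal := fun I : Finset (Fin n) =>
    eventually_cofinite_inv_one_add_smul_apply_eq_zero_iff
      ((G.adjMatrix ℝ).submatrix ((↑) : I → Fin n) (↑))
  filter_upwards [(G.adjMatrix ℝ).eventually_cofinite_inv_one_add_smul_apply_eq_zero_iff,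
    Filter.eventually_all.2 hprincipal] with ε hfull hsub
  refine ⟨hfull.1, fun I i j hi hj _ => ?_⟩
  rw [submatrix_one_add_smul _ _ Subtype.val_injective, (hsub I).2]
  exact (gsep_univ_sdiff_iff_forall_pow_apply_eq_zero G I ⟨i, hi⟩ ⟨j, hj⟩).symm
end

section
/- (Inner-product-preserving Johnson–Lindenstrauss) Let ε ∈ (0, 1/2) and let V ⊆ ℝ^d be a set of n unit vectors. There exists a linear map g: ℝ^d → ℝ^k with k = ⌈20 log(2n)/ε²⌉ such that for all u, v ∈ V, |⟨g(u), g(v)⟩ − ⟨u, v⟩| ≤ ε. -/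
/-!
Let `S` be a `k × d` matrix of independent uniform signs. For a fixed vector `a`, each coordinate
of `S a` is a Rademacher sum `T = ∑ ±aᵢ`, so `‖S a‖²` is a sum of `k` independent copies of `T²`.
Chernoff bounds for `T²` show that `‖S a‖² / k` lies within a factor `1 ± ε` of `‖a‖²` except
for a `2 exp(-kε²/8)` fraction of sign matrices: the upper tail uses the Gaussian linearisation
`exp(sT²) = √(s/π) ∫ exp(-sx² + 2sxT) dx` together with `E exp(cT) ≤ exp(c²‖a‖²/2)`, the lower
tail uses `E T² = ‖a‖²` and `E T⁴ ≤ 3‖a‖⁴`. Probabilities are counted over all `2^(dk)` sign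
matrices. A union bound over the `≤ 2n²` vectors `u ± v` with `u, v ∈ V` yields one good `S`,
and the polarization identity `4⟪x, y⟫ = ‖x + y‖² - ‖x - y‖²` turns the norm estimates for
`u ± v` into the inner-product estimate.
-/

open Real Finset MeasureTheory Pointwise

namespace JohnsonLindenstrauss

def boolSign (b : Bool) : ℝ := if b then 1 else -1

@[simp] lemma boolSign_true : boolSign true = 1 := rfl
@[simp] lemma boolSign_false : boolSign false = -1 := rfl

def signSum {d : ℕ} (a : Fin d → ℝ) (ρ : Fin d → Bool) : ℝ := ∑ i, boolSign (ρ i) * a i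

lemma sum_fun_fin_succ_bool {m : ℕ} (F : (Fin (m + 1) → Bool) → ℝ) :
    ∑ ρ, F ρ = ∑ ρ : Fin m → Bool, (F (Fin.cons true ρ) + F (Fin.cons false ρ)) := by
  rw [← (Fin.consEquiv fun _ ↦ Bool).sum_comp, Fintype.sum_prod_type, Fintype.sum_bool,
    ← sum_add_distrib]
  rfl

lemma signSum_cons {m : ℕ} (a : Fin (m + 1) → ℝ) (b : Bool) (ρ : Fin m → Bool) :
    signSum a (Fin.cons b ρ) = boolSign b * a 0 + signSum (Fin.tail a) ρ := by
  simp [signSum, Fin.sum_univ_succ, Fin.tail]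

lemma sum_signSum_sq {d : ℕ} (a : Fin d → ℝ) :
    ∑ ρ, signSum a ρ ^ 2 = 2 ^ d * ∑ i, a i ^ 2 := by
  induction d with
  | zero => simp [signSum]
  | succ m ih =>
    have key : ∀ ρ, signSum a (Fin.cons true ρ) ^ 2 + signSum a (Fin.cons false ρ) ^ 2
        = 2 * a 0 ^ 2 + 2 * signSum (Fin.tail a) ρ ^ 2 := by
      intro ρ; simp only [signSum_cons, boolSign_true, boolSign_false]; ring
    simp only [sum_fun_fin_succ_bool, key, sum_add_distrib, ← mul_sum, ih, sum_const, card_univ,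
      Fintype.card_fun, Fintype.card_bool, Fintype.card_fin, nsmul_eq_mul,
      Fin.sum_univ_succ (fun i => a i ^ 2), Fin.tail]
    push_cast; ring

lemma sum_signSum_pow_four_le {d : ℕ} (a : Fin d → ℝ) :
    ∑ ρ, signSum a ρ ^ 4 ≤ 3 * 2 ^ d * (∑ i, a i ^ 2) ^ 2 := by
  induction d with
  | zero => simp [signSum]
  | succ m ih =>
    have key : ∀ ρ, signSum a (Fin.cons true ρ) ^ 4 + signSum a (Fin.cons false ρ) ^ 4
        = 2 * a 0 ^ 4 + 12 * a 0 ^ 2 * signSum (Fin.tail a) ρ ^ 2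
          + 2 * signSum (Fin.tail a) ρ ^ 4 := by
      intro ρ; simp only [signSum_cons, boolSign_true, boolSign_false]; ring
    have ih' := ih (Fin.tail a)
    simp only [sum_fun_fin_succ_bool, key, sum_add_distrib, ← mul_sum, sum_signSum_sq, sum_const,
      card_univ, Fintype.card_fun, Fintype.card_bool, Fintype.card_fin, nsmul_eq_mul,
      Fin.sum_univ_succ (fun i => a i ^ 2), Fin.tail] at ih' ⊢
    have hA : 0 ≤ ∑ i : Fin m, a i.succ ^ 2 := by positivity
    have h2m : (0 : ℝ) ≤ 2 ^ m := by positivity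
    push_cast
    rw [pow_succ' (2 : ℝ) m]
    nlinarith [mul_nonneg h2m (mul_nonneg (sq_nonneg (a 0)) hA),
      mul_nonneg h2m (pow_nonneg (sq_nonneg (a 0)) 2)]

lemma sum_exp_mul_signSum_le {d : ℕ} (a : Fin d → ℝ) (c : ℝ) :
    ∑ ρ, exp (c * signSum a ρ) ≤ 2 ^ d * exp (c ^ 2 * (∑ i, a i ^ 2) / 2) := by
  have hprod : ∑ ρ, exp (c * signSum a ρ) = ∏ i, 2 * cosh (c * a i) := by
    simp only [signSum, mul_sum, exp_sum]
    rw [← Fintype.prod_sum (fun i b => exp (c * (boolSign b * a i)))]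
    refine prod_congr rfl fun i _ => ?_
    rw [Fintype.sum_bool, cosh_eq]
    simp only [boolSign_true, boolSign_false]
    ring_nf
  calc ∑ ρ, exp (c * signSum a ρ) = ∏ i, 2 * cosh (c * a i) := hprod
    _ ≤ ∏ i, 2 * exp ((c * a i) ^ 2 / 2) :=
      prod_le_prod (fun i _ => by positivity) fun i _ => by
        gcongr; exact cosh_le_exp_half_sq _
    _ = 2 ^ d * exp (c ^ 2 * (∑ i, a i ^ 2) / 2) := by
      rw [prod_mul_distrib, ← exp_sum, mul_sum, sum_div]
      simp only [prod_const, card_univ, Fintype.card_fin, mul_pow]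

lemma exp_neg_mul_sq_add_mul (s t x : ℝ) :
    exp (-s * x ^ 2 + 2 * s * t * x) = exp (-s * (x - t) ^ 2) * exp (s * t ^ 2) := by
  rw [← exp_add]; ring_nf

lemma integrable_exp_neg_mul_sq_add_mul {s : ℝ} (hs : 0 < s) (t : ℝ) :
    Integrable fun x : ℝ => exp (-s * x ^ 2 + 2 * s * t * x) := by
  simp only [exp_neg_mul_sq_add_mul]
  exact ((integrable_exp_neg_mul_sq hs).comp_sub_right t).mul_const _

lemma integral_exp_neg_mul_sq_add_mul (s t : ℝ) :
    ∫ x : ℝ, exp (-s * x ^ 2 + 2 * s * t * x) = √(π / s) * exp (s * t ^ 2) := by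
  simp only [exp_neg_mul_sq_add_mul]
  rw [integral_mul_const, integral_sub_right_eq_self (fun x => exp (-s * x ^ 2)) t,
    integral_gaussian]

lemma sum_exp_mul_signSum_sq_le {d : ℕ} (a : Fin d → ℝ) {s : ℝ} (hs : 0 < s)
    (hsA : 2 * s * ∑ i, a i ^ 2 < 1) :
    ∑ ρ, exp (s * signSum a ρ ^ 2) ≤ 2 ^ d / √(1 - 2 * s * ∑ i, a i ^ 2) := by
  set A := ∑ i, a i ^ 2
  have hs' : 0 < s * (1 - 2 * s * A) := by nlinarith
  have hpointwise : ∀ x : ℝ, ∑ ρ, exp (-s * x ^ 2 + 2 * s * signSum a ρ * x)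
      ≤ 2 ^ d * exp (-(s * (1 - 2 * s * A)) * x ^ 2) := fun x => by
    calc ∑ ρ, exp (-s * x ^ 2 + 2 * s * signSum a ρ * x)
        = exp (-s * x ^ 2) * ∑ ρ, exp (2 * s * x * signSum a ρ) := by
          rw [mul_sum]; congr! 1 with ρ; rw [← exp_add]; ring_nf
      _ ≤ exp (-s * x ^ 2) * (2 ^ d * exp ((2 * s * x) ^ 2 * A / 2)) := by
          gcongr; exact sum_exp_mul_signSum_le a _
      _ = 2 ^ d * exp (-(s * (1 - 2 * s * A)) * x ^ 2) := by
          rw [mul_left_comm, ← exp_add]; ring_nf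
  have hintegral : √(π / s) * ∑ ρ, exp (s * signSum a ρ ^ 2)
      ≤ 2 ^ d * √(π / (s * (1 - 2 * s * A))) := by
    calc √(π / s) * ∑ ρ, exp (s * signSum a ρ ^ 2)
        = ∫ x, ∑ ρ, exp (-s * x ^ 2 + 2 * s * signSum a ρ * x) := by
          rw [integral_finsetSum _ fun ρ _ => integrable_exp_neg_mul_sq_add_mul hs _, mul_sum]
          simp only [integral_exp_neg_mul_sq_add_mul]
      _ ≤ ∫ x, 2 ^ d * exp (-(s * (1 - 2 * s * A)) * x ^ 2) :=
          integral_mono (integrable_finsetSum _ fun ρ _ => integrable_exp_neg_mul_sq_add_mul hs _)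
            ((integrable_exp_neg_mul_sq hs').const_mul _) hpointwise
      _ = 2 ^ d * √(π / (s * (1 - 2 * s * A))) := by rw [integral_const_mul, integral_gaussian]
  have hsplit : √(π / (s * (1 - 2 * s * A))) = √(π / s) * (1 / √(1 - 2 * s * A)) := by
    rw [← div_div, sqrt_div' _ (by linarith), mul_one_div]
  rw [hsplit, mul_left_comm] at hintegral
  rw [div_eq_mul_one_div]
  exact le_of_mul_le_mul_left hintegral (by positivity)

lemma exp_neg_le_one_sub_add_sq_div_two {u : ℝ} (hu : 0 ≤ u) : exp (-u) ≤ 1 - u + u ^ 2 / 2 := by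
  rw [exp_neg]
  calc (exp u)⁻¹ ≤ (1 + u + u ^ 2 / 2)⁻¹ :=
        inv_anti₀ (by positivity) (quadratic_le_exp_of_nonneg hu)
    _ ≤ 1 - u + u ^ 2 / 2 := by
      rw [inv_le_iff_one_le_mul₀ (by positivity)]
      nlinarith [pow_nonneg hu 4]

lemma sum_exp_neg_mul_signSum_sq_le {d : ℕ} (a : Fin d → ℝ) {s : ℝ} (hs : 0 ≤ s) :
    ∑ ρ, exp (-(s * signSum a ρ ^ 2))
      ≤ 2 ^ d * exp (-(s * ∑ i, a i ^ 2) + 3 * (s * ∑ i, a i ^ 2) ^ 2 / 2) := by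
  set A := ∑ i, a i ^ 2
  calc ∑ ρ, exp (-(s * signSum a ρ ^ 2))
      ≤ ∑ ρ, (1 - s * signSum a ρ ^ 2 + s ^ 2 / 2 * signSum a ρ ^ 4) :=
        sum_le_sum fun ρ _ => (exp_neg_le_one_sub_add_sq_div_two (by positivity)).trans_eq
          (by ring)
    _ = 2 ^ d - s * (2 ^ d * A) + s ^ 2 / 2 * ∑ ρ, signSum a ρ ^ 4 := by
        rw [sum_add_distrib, sum_sub_distrib, ← mul_sum, ← mul_sum, sum_signSum_sq]
        simp [A]
    _ ≤ 2 ^ d * (-(s * A) + 3 * (s * A) ^ 2 / 2 + 1) := by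
        nlinarith [mul_le_mul_of_nonneg_left (sum_signSum_pow_four_le a)
          (by positivity : (0 : ℝ) ≤ s ^ 2 / 2)]
    _ ≤ 2 ^ d * exp (-(s * A) + 3 * (s * A) ^ 2 / 2) := by gcongr; exact add_one_le_exp _

lemma one_div_sqrt_one_sub_le_exp {y : ℝ} (h0 : 0 ≤ y) (h1 : y ≤ 1 / 2) :
    1 / √(1 - y) ≤ exp ((y + y ^ 2) / 2) := by
  have key : 1 ≤ exp (y + y ^ 2) * (1 - y) :=
    calc 1 ≤ (1 + (y + y ^ 2) + (y + y ^ 2) ^ 2 / 2) * (1 - y) := by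
          nlinarith [mul_nonneg (mul_nonneg h0 h0) (mul_nonneg h0 h0), pow_nonneg h0 3]
      _ ≤ exp (y + y ^ 2) * (1 - y) := by
          gcongr
          · linarith
          · exact quadratic_le_exp_of_nonneg (by positivity)
  rw [div_le_iff₀ (sqrt_pos.2 (by linarith)), exp_half, ← sqrt_mul (exp_pos _).le]
  exact one_le_sqrt.2 key

lemma card_filter_le_le_exp_neg_mul_sum_exp {α : Type*} [Fintype α] (f : α → ℝ) (c : ℝ) :
    (#{x | c ≤ f x} : ℝ) ≤ exp (-c) * ∑ x, exp (f x) := by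
  rw [exp_neg, ← div_eq_inv_mul, le_div_iff₀ (exp_pos c)]
  calc (#{x | c ≤ f x} : ℝ) * exp c = ∑ x ∈ {x | c ≤ f x}, exp c := by
        rw [sum_const, nsmul_eq_mul]
    _ ≤ ∑ x ∈ {x | c ≤ f x}, exp (f x) :=
        sum_le_sum fun x hx => exp_le_exp.2 (mem_filter.1 hx).2
    _ ≤ ∑ x, exp (f x) :=
        sum_le_sum_of_subset_of_nonneg (filter_subset _ _) fun _ _ _ => (exp_pos _).le

lemma card_filter_le_pi_sum_le_of_sum_exp_le {β : Type*} [Fintype β] (F : β → ℝ) {t c δ : ℝ} (k : ℕ)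
    (hrow : ∑ b, exp (t * F b) ≤ Fintype.card β * exp (t * c - δ)) :
    (#{ω : Fin k → β | k * (t * c) ≤ t * ∑ j, F (ω j)} : ℝ)
      ≤ Fintype.card β ^ k * exp (-(k * δ)) := by
  calc (#{ω : Fin k → β | k * (t * c) ≤ t * ∑ j, F (ω j)} : ℝ)
      ≤ exp (-(k * (t * c))) * ∑ ω : Fin k → β, exp (t * ∑ j, F (ω j)) :=
        card_filter_le_le_exp_neg_mul_sum_exp _ _
    _ = exp (-(k * (t * c))) * (∑ b, exp (t * F b)) ^ k := by
        rw [Fintype.sum_pow]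
        simp only [mul_sum, exp_sum]
    _ ≤ exp (-(k * (t * c))) * (Fintype.card β * exp (t * c - δ)) ^ k := by gcongr
    _ = Fintype.card β ^ k * exp (-(k * δ)) := by
        rw [mul_pow, ← exp_nat_mul, mul_left_comm, ← exp_add]
        ring_nf

lemma card_filter_lt_abs_sum_sq_signSum_sub_le {d : ℕ} (k : ℕ) (a : Fin d → ℝ) {ε : ℝ}
    (hε0 : 0 < ε) (hε : ε ≤ 1 / 2) :
    (#{ω : Fin k → Fin d → Bool |
        ε * (k * ∑ i, a i ^ 2) < |∑ j, signSum a (ω j) ^ 2 - k * ∑ i, a i ^ 2|} : ℝ)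
      ≤ 2 * (2 ^ d) ^ k * exp (-(k * ε ^ 2 / 8)) := by
  rcases (by positivity : 0 ≤ ∑ i, a i ^ 2).eq_or_lt with hA | hA
  · have ha : a = 0 := funext fun i => by
      simpa using (sum_eq_zero_iff_of_nonneg fun i _ => sq_nonneg (a i)).1 hA.symm i (mem_univ i)
    subst ha
    simp [signSum]
    positivity
  set A := ∑ i, a i ^ 2
  set s := ε / (4 * A)
  have hs : 0 < s := by positivity
  have hsA : s * A = ε / 4 := by simp only [s]; field_simp [hA.ne']
  have hcard : (Fintype.card (Fin d → Bool) : ℝ) = 2 ^ d := by simp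
  have hupper := card_filter_le_pi_sum_le_of_sum_exp_le (fun ρ => signSum a ρ ^ 2) (t := s)
    (c := (1 + ε) * A) (δ := ε ^ 2 / 8) k <| by
      rw [hcard]
      calc ∑ ρ, exp (s * signSum a ρ ^ 2) ≤ 2 ^ d / √(1 - 2 * s * A) :=
            sum_exp_mul_signSum_sq_le a hs (by nlinarith)
        _ ≤ 2 ^ d * exp ((ε / 2 + (ε / 2) ^ 2) / 2) := by
            rw [div_eq_mul_one_div, mul_assoc, hsA, show 1 - 2 * (ε / 4) = 1 - ε / 2 by ring]
            gcongr
            exact one_div_sqrt_one_sub_le_exp (by positivity) (by linarith)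
        _ = 2 ^ d * exp (s * ((1 + ε) * A) - ε ^ 2 / 8) := by
            rw [show s * ((1 + ε) * A) = s * A * (1 + ε) by ring, hsA]
            congr 2; ring
  have hlower := card_filter_le_pi_sum_le_of_sum_exp_le (fun ρ => signSum a ρ ^ 2) (t := -s)
    (c := (1 - ε) * A) (δ := ε ^ 2 / 8) k <| by
      rw [hcard]
      calc ∑ ρ, exp (-s * signSum a ρ ^ 2)
          ≤ 2 ^ d * exp (-(s * A) + 3 * (s * A) ^ 2 / 2) := by
            simpa only [neg_mul] using sum_exp_neg_mul_signSum_sq_le a hs.le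
        _ ≤ 2 ^ d * exp (-s * ((1 - ε) * A) - ε ^ 2 / 8) := by
            rw [show -s * ((1 - ε) * A) = -(s * A * (1 - ε)) by ring, hsA]
            gcongr
            nlinarith
  calc (#{ω : Fin k → Fin d → Bool |
        ε * (k * A) < |∑ j, signSum a (ω j) ^ 2 - k * A|} : ℝ)
      ≤ (#{ω : Fin k → Fin d → Bool | k * (s * ((1 + ε) * A)) ≤ s * ∑ j, signSum a (ω j) ^ 2} +
        #{ω : Fin k → Fin d → Bool |
          k * (-s * ((1 - ε) * A)) ≤ -s * ∑ j, signSum a (ω j) ^ 2} : ℕ) := by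
        refine Nat.cast_le.2 ((card_le_card fun ω hω => ?_).trans (card_union_le _ _))
        simp only [mem_union, mem_filter, mem_univ, true_and] at hω ⊢
        rcases lt_abs.1 hω with h | h
        · left; nlinarith
        · right; nlinarith
    _ ≤ 2 * (2 ^ d) ^ k * exp (-(k * ε ^ 2 / 8)) := by
        push_cast
        rw [hcard, ← mul_div_assoc] at hupper hlower
        linarith

lemma exists_forall_of_sum_card_filter_not_lt {α ι : Type*} [Fintype α] (W : Finset ι)
    (P : ι → α → Prop) [∀ w, DecidablePred (P w)]
    (h : ∑ w ∈ W, #{x | ¬ P w x} < Fintype.card α) : ∃ x, ∀ w ∈ W, P w x := by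
  classical
  by_contra! hbad
  refine h.not_ge ((card_le_card fun x _ => ?_).trans card_biUnion_le)
  obtain ⟨w, hw, hPw⟩ := hbad x
  exact mem_biUnion.2 ⟨w, hw, mem_filter.2 ⟨mem_univ x, hPw⟩⟩

lemma exists_signs_forall_abs_sum_sq_signSum_sub_le {d k : ℕ} {ε : ℝ} (hε0 : 0 < ε)
    (hε : ε ≤ 1 / 2) (W : Finset (Fin d → ℝ)) (hW : #W * (2 * exp (-(k * ε ^ 2 / 8))) < 1) :
    ∃ ω : Fin k → Fin d → Bool, ∀ a ∈ W,
      |∑ j, signSum a (ω j) ^ 2 - k * ∑ i, a i ^ 2| ≤ ε * (k * ∑ i, a i ^ 2) := by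
  refine exists_forall_of_sum_card_filter_not_lt W _ ?_
  have hcard : (Fintype.card (Fin k → Fin d → Bool) : ℝ) = (2 ^ d) ^ k := by simp
  rw [← Nat.cast_lt (α := ℝ), Nat.cast_sum, hcard]
  calc _ ≤ ∑ a ∈ W, 2 * (2 ^ d) ^ k * exp (-(k * ε ^ 2 / 8)) := sum_le_sum fun a _ => by
        simpa only [not_le] using card_filter_lt_abs_sum_sq_signSum_sub_le k a hε0 hε
    _ = #W * (2 * exp (-(k * ε ^ 2 / 8))) * (2 ^ d) ^ k := by
        rw [sum_const, nsmul_eq_mul]; ring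
    _ < (2 ^ d) ^ k := mul_lt_of_lt_one_left (by positivity) hW

def signMatrix {k d : ℕ} (ω : Fin k → Fin d → Bool) : Matrix (Fin k) (Fin d) ℝ :=
  Matrix.of fun j i => boolSign (ω j i)

lemma norm_toEuclideanLin_signMatrix_sq {k d : ℕ} (ω : Fin k → Fin d → Bool)
    (x : EuclideanSpace ℝ (Fin d)) :
    ‖Matrix.toEuclideanLin (signMatrix ω) x‖ ^ 2 = ∑ j, signSum x (ω j) ^ 2 := by
  simp [EuclideanSpace.real_norm_sq_eq, Matrix.ofLp_toLpLin, Matrix.mulVec, dotProduct,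
    signMatrix, signSum]

theorem exists_linearMap_abs_norm_sq_sub_le {d k : ℕ} (hk : 0 < k) {ε : ℝ} (hε0 : 0 < ε)
    (hε : ε ≤ 1 / 2) (W : Finset (EuclideanSpace ℝ (Fin d)))
    (hW : #W * (2 * exp (-(k * ε ^ 2 / 8))) < 1) :
    ∃ g : EuclideanSpace ℝ (Fin d) →ₗ[ℝ] EuclideanSpace ℝ (Fin k),
      ∀ w ∈ W, |‖g w‖ ^ 2 - ‖w‖ ^ 2| ≤ ε * ‖w‖ ^ 2 := by
  have hk' : (0 : ℝ) < k := by exact_mod_cast hk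
  obtain ⟨ω, hω⟩ := exists_signs_forall_abs_sum_sq_signSum_sub_le hε0 hε (W.image WithLp.ofLp)
    ((mul_le_mul_of_nonneg_right (mod_cast card_image_le) (by positivity)).trans_lt hW)
  refine ⟨(√k)⁻¹ • Matrix.toEuclideanLin (signMatrix ω), fun w hw => ?_⟩
  have hnorm : ‖((√k)⁻¹ • Matrix.toEuclideanLin (signMatrix ω)) w‖ ^ 2
      = (∑ j, signSum w (ω j) ^ 2) / k := by
    rw [LinearMap.smul_apply, norm_smul, mul_pow, norm_toEuclideanLin_signMatrix_sq, norm_inv,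
      norm_of_nonneg (sqrt_nonneg _), inv_pow, sq_sqrt hk'.le, inv_mul_eq_div]
  rw [hnorm, EuclideanSpace.real_norm_sq_eq, div_sub' hk'.ne', abs_div, abs_of_pos hk',
    div_le_iff₀ hk']
  exact (hω w (mem_image_of_mem _ hw)).trans_eq (by ring)

lemma abs_inner_map_sub_inner_le {F G : Type*} [NormedAddCommGroup F] [InnerProductSpace ℝ F]
    [NormedAddCommGroup G] [InnerProductSpace ℝ G] (g : F →ₗ[ℝ] G) {ε : ℝ} {u v : F}
    (hadd : |‖g (u + v)‖ ^ 2 - ‖u + v‖ ^ 2| ≤ ε * ‖u + v‖ ^ 2)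
    (hsub : |‖g (u - v)‖ ^ 2 - ‖u - v‖ ^ 2| ≤ ε * ‖u - v‖ ^ 2) :
    |inner ℝ (g u) (g v) - inner ℝ u v| ≤ ε * (‖u‖ ^ 2 + ‖v‖ ^ 2) / 2 := by
  rw [map_add, norm_add_sq_real, norm_add_sq_real] at hadd
  rw [map_sub, norm_sub_sq_real, norm_sub_sq_real] at hsub
  rw [abs_le] at hadd hsub ⊢
  constructor <;> linarith [hadd.1, hadd.2, hsub.1, hsub.2]

lemma two_mul_sq_mul_two_mul_exp_lt_one {n : ℝ} (hn : 1 ≤ n) {t : ℝ}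
    (ht : 20 * log (2 * n) ≤ t) : 2 * n ^ 2 * (2 * exp (-(t / 8))) < 1 := by
  have hL : 0 < log (2 * n) := log_pos (by linarith)
  calc 2 * n ^ 2 * (2 * exp (-(t / 8))) = exp (2 * log (2 * n) - t / 8) := by
        rw [exp_sub, two_mul (log _), exp_add, exp_log (by linarith), exp_neg, div_eq_mul_inv]
        ring
    _ < 1 := exp_lt_one_iff.2 (by linarith)

end JohnsonLindenstrauss

open JohnsonLindenstrauss

/-- Inner-product-preserving Johnson–Lindenstrauss: for `ε ∈ (0, 1/2)` and a set `V` of `n`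
unit vectors in `ℝ^d`, there is a linear map into `ℝ^k` with `k = ⌈20 log(2n)/ε²⌉` preserving
all pairwise inner products of `V` up to `ε`. -/
theorem inner_product_JL {d n : ℕ} (ε : ℝ) (hε : ε ∈ Set.Ioo (0 : ℝ) (1/2))
    (V : Finset (EuclideanSpace ℝ (Fin d))) (hcard : V.card = n)
    (hunit : ∀ v ∈ V, ‖v‖ = 1) :
    ∃ g : EuclideanSpace ℝ (Fin d) →ₗ[ℝ]
        EuclideanSpace ℝ (Fin ⌈20 * Real.log (2 * n) / ε ^ 2⌉₊),
      ∀ u ∈ V, ∀ v ∈ V, |(inner ℝ (g u) (g v) : ℝ) - (inner ℝ u v : ℝ)| ≤ ε := by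
  obtain ⟨hε0, hε⟩ := hε
  rcases V.eq_empty_or_nonempty with rfl | hV
  · exact ⟨0, by simp⟩
  have hn : (1 : ℝ) ≤ n := by rw [← hcard]; exact_mod_cast hV.card_pos
  have hk : 20 * Real.log (2 * n) ≤ ⌈20 * Real.log (2 * n) / ε ^ 2⌉₊ * ε ^ 2 :=
    (div_le_iff₀ (by positivity)).1 (Nat.le_ceil _)
  have hk0 : 0 < ⌈20 * Real.log (2 * n) / ε ^ 2⌉₊ :=
    Nat.ceil_pos.2 (by have := Real.log_pos (by linarith : (1 : ℝ) < 2 * n); positivity)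
  have hW : (#((V + V) ∪ (V - V)) : ℝ) ≤ 2 * n ^ 2 := by
    have := (card_union_le (V + V) (V - V)).trans (add_le_add card_add_le card_sub_le)
    rw [hcard] at this
    exact_mod_cast this.trans_eq (by ring)
  obtain ⟨g, hg⟩ := exists_linearMap_abs_norm_sq_sub_le hk0 hε0 hε.le ((V + V) ∪ (V - V))
    ((mul_le_mul_of_nonneg_right hW (by positivity)).trans_lt
      (two_mul_sq_mul_two_mul_exp_lt_one hn hk))
  refine ⟨g, fun u hu v hv => ?_⟩
  have := abs_inner_map_sub_inner_le g (hg _ (mem_union_left _ (add_mem_add hu hv)))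
    (hg _ (mem_union_right _ (sub_mem_sub hu hv)))
  rw [hunit u hu, hunit v hv] at this
  linarith
end

section
/- Let A and Ã be real (r+1)×(r+1) matrices with ‖Ã − A‖ ≤ δ (operator norm). Then |det(Ã) − det(A)| ≤ (r+1)·δ·max{‖A‖, ‖Ã‖}^r. -/
/-!
Replacing the rows of `A` by those of `Ã` one at a time changes the determinant, at each step,
by the determinant of a matrix with one row of `Ã - A` and the other rows taken from `A` or `Ã`.
By Hadamard's inequality such a determinant is at most the product of the Euclidean norms of its
rows, and every row of a matrix has norm at most its spectral norm.
-/

open scoped Matrix.Norms.L2Operator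

theorem OrthonormalBasis.abs_det_le_prod_norm {E : Type*} [NormedAddCommGroup E]
    [InnerProductSpace ℝ E] {n : ℕ} (b : OrthonormalBasis (Fin n) ℝ E) (v : Fin n → E) :
    |b.toBasis.det v| ≤ ∏ i, ‖v i‖ := by
  have : Fact (Module.finrank ℝ E = n) := ⟨by simpa using Module.finrank_eq_card_basis b.toBasis⟩
  rw [← b.toBasis.orientation.volumeForm_robust' b]
  exact b.toBasis.orientation.abs_volumeForm_apply_le v

namespace Matrix

section
variable {𝕜 : Type*} [RCLike 𝕜] {m n : Type*} [Fintype m] [Fintype n] [DecidableEq n]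

theorem norm_col_le_l2_opNorm (A : Matrix m n 𝕜) (j : n) :
    ‖WithLp.toLp 2 (A.col j)‖ ≤ ‖A‖ := by
  simpa [mulVec_single_one] using A.l2_opNorm_mulVec (EuclideanSpace.single j 1)

theorem norm_row_le_l2_opNorm [DecidableEq m] (A : Matrix m n 𝕜) (i : m) :
    ‖WithLp.toLp 2 (A i)‖ ≤ ‖A‖ := by
  have := Aᴴ.norm_col_le_l2_opNorm i
  rw [l2_opNorm_conjTranspose] at this
  convert this using 1
  simp [EuclideanSpace.norm_eq, conjTranspose_apply]

theorem norm_rows_le_l2_opNorm [DecidableEq m] (A : Matrix m n 𝕜) :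
    ‖fun i => WithLp.toLp 2 (A i)‖ ≤ ‖A‖ :=
  pi_norm_le_iff_of_nonneg (norm_nonneg A) |>.mpr A.norm_row_le_l2_opNorm

end

variable {n : ℕ}

theorem det_eq_basisFun_det_rows (A : Matrix (Fin n) (Fin n) ℝ) :
    A.det = (EuclideanSpace.basisFun (Fin n) ℝ).toBasis.det (fun i => WithLp.toLp 2 (A i)) := by
  rw [Module.Basis.det_apply, ← det_transpose]
  rfl

theorem abs_det_sub_det_le (A B : Matrix (Fin n) (Fin n) ℝ) :
    |A.det - B.det| ≤ n * max ‖A‖ ‖B‖ ^ (n - 1) * ‖A - B‖ := by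
  let b := EuclideanSpace.basisFun (Fin n) ℝ
  have hb := b.toBasis.det.norm_image_sub_le_of_bound zero_le_one
    (fun v => by simpa using b.abs_det_le_prod_norm v)
    (fun i => WithLp.toLp 2 (A i)) (fun i => WithLp.toLp 2 (B i))
  rw [← det_eq_basisFun_det_rows, ← det_eq_basisFun_det_rows, Real.norm_eq_abs,
    Fintype.card_fin, one_mul] at hb
  refine hb.trans ?_
  gcongr
  · exact A.norm_rows_le_l2_opNorm
  · exact B.norm_rows_le_l2_opNorm
  · exact (A - B).norm_rows_le_l2_opNorm

end Matrix

/-- Determinant perturbation bound: if `‖Ã − A‖ ≤ δ` in the spectral (ℓ²-operator) norm for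
`(r+1) × (r+1)` real matrices, then `|det Ã − det A| ≤ (r+1)·δ·max{‖A‖, ‖Ã‖}^r`. -/
theorem det_perturbation_bound {r : ℕ} (A At : Matrix (Fin (r + 1)) (Fin (r + 1)) ℝ)
    (δ : ℝ) (h : ‖At - A‖ ≤ δ) :
    |At.det - A.det| ≤ ((r : ℝ) + 1) * δ * max ‖A‖ ‖At‖ ^ r := by
  calc |At.det - A.det| ≤ ((r + 1 : ℕ) : ℝ) * max ‖At‖ ‖A‖ ^ r * ‖At - A‖ :=
        Matrix.abs_det_sub_det_le At A
    _ ≤ ((r : ℝ) + 1) * δ * max ‖A‖ ‖At‖ ^ r := by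
        rw [max_comm, mul_right_comm]
        push_cast
        gcongr
end
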